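/- arXiv:1910.14485 — 2 statements merged into one kernel-verified Lean document; each statement's English description precedes it below -/
import Mathlib

section
/- As x → ∞, the number of sixth-power free integers n with |n| ≤ x is asymptotic to (1890/π⁶)·x; that is, the quotient of the count #{n ∈ ℤ : n sixth-power free, |n| ≤ x} by x tends to 2/ζ(6) = 1890/π⁶ as x → ∞. -/
open Filter

def SixthPowerFree (n : ℤ) : Prop :=
  n ≠ 0 ∧ ∀ p : ℕ, p.Prime → ¬ ((p : ℤ) ^ 6 ∣ n)

/-!
Möbius inversion over the `d` with `d ^ k ∣ n` detects `k`-free `n`, because these `d` are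
exactly the divisors of the largest `m` with `m ^ k ∣ n`. Hence
`#{n ≤ N | n is k-free} = ∑_{d ≤ N} μ(d) ⌊N / d^k⌋`; dividing by `N` and passing to the limit
termwise (dominated by `1 / d^k`) gives `∑ μ(d) / d^k = 1 / ζ(k)`. For `k = 6` we have
`ζ(6) = π⁶ / 945`, and each `k`-free natural number `m` accounts for the two integers `±m`.
-/

open Finset ArithmeticFunction Topology Real
open scoped ArithmeticFunction.Moebius LSeries.notation

def IsPowerFree (k n : ℕ) : Prop := ∀ p : ℕ, p.Prime → ¬ p ^ k ∣ n

theorem not_isPowerFree_zero (k : ℕ) : ¬ IsPowerFree k 0 :=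
  fun h => h 2 Nat.prime_two (dvd_zero _)

namespace Nat

theorem exists_pow_dvd_iff_dvd {k n : ℕ} (hk : k ≠ 0) (hn : n ≠ 0) :
    ∃ m, ∀ d, d ^ k ∣ n ↔ d ∣ m := by
  set f : ℕ →₀ ℕ := n.factorization.mapRange (· / k) (Nat.zero_div k)
  have hf : ∀ p ∈ f.support, p.Prime := fun p hp =>
    Nat.prime_of_mem_primeFactors (Finsupp.support_mapRange hp)
  have hm : (f.prod (· ^ ·)).factorization = f := Nat.prod_pow_factorization_eq_self hf
  have hm0 : f.prod (· ^ ·) ≠ 0 := by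
    rw [Finsupp.prod, Finset.prod_ne_zero_iff]
    exact fun p hp => pow_ne_zero _ (hf p hp).ne_zero
  refine ⟨f.prod (· ^ ·), fun d => ?_⟩
  rcases eq_or_ne d 0 with rfl | hd
  · simp [zero_pow hk, hn, hm0]
  rw [← Nat.factorization_le_iff_dvd (pow_ne_zero k hd) hn,
    ← Nat.factorization_le_iff_dvd hd hm0, hm, Finsupp.le_def, Finsupp.le_def]
  refine forall_congr' fun p => ?_
  rw [Nat.factorization_pow, Finsupp.smul_apply, smul_eq_mul, Finsupp.mapRange_apply,
    Nat.le_div_iff_mul_le (Nat.pos_of_ne_zero hk), mul_comm]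

end Nat

theorem isPowerFree_iff_eq_one {k n m : ℕ} (h : ∀ d, d ^ k ∣ n ↔ d ∣ m) :
    IsPowerFree k n ↔ m = 1 := by
  simp only [IsPowerFree, h, Nat.eq_one_iff_not_exists_prime_dvd]

open scoped Classical in
theorem sum_moebius_pow_dvd {k n : ℕ} (hk : k ≠ 0) (hn : n ≠ 0) :
    ∑ d ∈ n.divisors with d ^ k ∣ n, μ d = if IsPowerFree k n then 1 else 0 := by
  obtain ⟨m, hm⟩ := Nat.exists_pow_dvd_iff_dvd hk hn
  have hm0 : m ≠ 0 := by
    rintro rfl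
    simpa [zero_pow hk, hn] using (hm 0).mpr (dvd_refl 0)
  have hdivisors : {d ∈ n.divisors | d ^ k ∣ n} = m.divisors := by
    ext d
    simp only [mem_filter, Nat.mem_divisors, hm, and_iff_left hm0]
    exact ⟨And.right, fun hd => ⟨⟨(dvd_pow_self d hk).trans ((hm d).mpr hd), hn⟩, hd⟩⟩
  rw [hdivisors, isPowerFree_iff_eq_one hm, ← coe_mul_zeta_apply, moebius_mul_coe_zeta, one_apply]
  congr

open scoped Classical in
theorem card_isPowerFree_Ioc {k : ℕ} (hk : k ≠ 0) (N : ℕ) :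
    (#{n ∈ Ioc 0 N | IsPowerFree k n} : ℤ) = ∑ d ∈ Ioc 0 N, μ d * (N / d ^ k : ℕ) := by
  calc (#{n ∈ Ioc 0 N | IsPowerFree k n} : ℤ)
      = ∑ n ∈ Ioc 0 N, ∑ d ∈ n.divisors with d ^ k ∣ n, μ d := by
        rw [card_filter, Nat.cast_sum]
        refine sum_congr rfl fun n hn => ?_
        rw [sum_moebius_pow_dvd hk (mem_Ioc.mp hn).1.ne']
        split_ifs <;> simp
    _ = ∑ d ∈ Ioc 0 N, ∑ n ∈ Ioc 0 N with d ^ k ∣ n, μ d := by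
        refine sum_comm' fun n d => ?_
        simp only [mem_filter, mem_Ioc, Nat.mem_divisors]
        constructor
        · rintro ⟨⟨hn, hnN⟩, ⟨hdn, -⟩, hdk⟩
          exact ⟨⟨⟨hn, hnN⟩, hdk⟩, Nat.pos_of_dvd_of_pos hdn hn, (Nat.le_of_dvd hn hdn).trans hnN⟩
        · rintro ⟨⟨⟨hn, hnN⟩, hdk⟩, -⟩
          exact ⟨⟨hn, hnN⟩, ⟨(dvd_pow_self d hk).trans hdk, hn.ne'⟩, hdk⟩
    _ = ∑ d ∈ Ioc 0 N, μ d * (N / d ^ k : ℕ) := by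
        simp only [sum_const, Nat.Ioc_filter_dvd_card_eq_div, nsmul_eq_mul, mul_comm]

theorem natCast_div_div_le_one_div (N m : ℕ) : ((N / m : ℕ) : ℝ) / N ≤ 1 / m := by
  rcases eq_or_ne N 0 with rfl | hN
  · simp
  rw [div_le_iff₀ (by positivity), one_div_mul_eq_div]
  exact Nat.cast_div_le

theorem tendsto_natCast_div_div_atTop (m : ℕ) :
    Tendsto (fun N : ℕ => ((N / m : ℕ) : ℝ) / N) atTop (𝓝 (1 / m)) := by
  rcases eq_or_ne m 0 with rfl | hm
  · simp
  have hm' : (0 : ℝ) < m := Nat.cast_pos.mpr (Nat.pos_of_ne_zero hm)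
  have hfloor := (tendsto_nat_floor_div_atTop.comp
    (tendsto_natCast_atTop_atTop.atTop_div_const hm')).mul_const (1 / (m : ℝ))
  rw [one_mul] at hfloor
  refine hfloor.congr' ?_
  filter_upwards [eventually_ne_atTop 0] with N hN
  simp only [Function.comp_apply, Nat.floor_div_natCast, Nat.floor_natCast]
  field_simp

open scoped Classical in
theorem tendsto_card_isPowerFree_Ioc_div {k : ℕ} (hk : 2 ≤ k) :
    Tendsto (fun N : ℕ => (#{n ∈ Ioc 0 N | IsPowerFree k n} : ℝ) / N) atTop
      (𝓝 (∑' d : ℕ, (μ d : ℝ) / (d : ℝ) ^ k)) := by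
  set f : ℕ → ℕ → ℝ := fun N d => μ d * ((N / d ^ k : ℕ) : ℝ) / N
  have hsum : ∀ N, (#{n ∈ Ioc 0 N | IsPowerFree k n} : ℝ) / N = ∑' d, f N d := by
    intro N
    rw [tsum_eq_sum (s := Ioc 0 N), ← Int.cast_natCast, card_isPowerFree_Ioc (by omega),
      Int.cast_sum, sum_div]
    · push_cast
      rfl
    intro d hd
    rcases eq_or_ne d 0 with rfl | hd0
    · simp [f]
    · have hNd : N < d := by
        simp only [mem_Ioc, not_and, not_le] at hd
        exact hd (Nat.pos_of_ne_zero hd0)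
      have hNdk : N < d ^ k := hNd.trans_le (Nat.le_self_pow (by omega) d)
      simp [f, Nat.div_eq_of_lt hNdk]
  have hlim : ∀ d, Tendsto (f · d) atTop (𝓝 ((μ d : ℝ) / (d : ℝ) ^ k)) := by
    intro d
    have := (tendsto_natCast_div_div_atTop (d ^ k)).const_mul (μ d : ℝ)
    push_cast at this
    simpa only [f, mul_div_assoc, div_eq_mul_one_div (μ d : ℝ)] using this
  have hbound : ∀ N d, ‖f N d‖ ≤ 1 / (d : ℝ) ^ k := by
    intro N d
    have hμ : |(μ d : ℝ)| ≤ 1 := by exact_mod_cast abs_moebius_le_one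
    calc ‖f N d‖ = |(μ d : ℝ)| * (((N / d ^ k : ℕ) : ℝ) / N) := by
          simp [f, mul_div_assoc]
      _ ≤ 1 * (1 / (d : ℝ) ^ k) := by
          have hdiv := natCast_div_div_le_one_div N (d ^ k)
          push_cast at hdiv
          exact mul_le_mul hμ hdiv (by positivity) zero_le_one
      _ = 1 / (d : ℝ) ^ k := one_mul _
  simpa only [hsum] using tendsto_tsum_of_dominated_convergence
    (Real.summable_one_div_nat_pow.mpr (by omega)) hlim (Eventually.of_forall hbound)

theorem LSeries_ofReal_natCast {k : ℕ} (hk : k ≠ 0) (f : ℕ → ℝ) :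
    L (fun n => (f n : ℂ)) k = ((∑' n : ℕ, f n / (n : ℝ) ^ k : ℝ) : ℂ) := by
  rw [LSeries, Complex.ofReal_tsum]
  refine tsum_congr fun n => ?_
  rcases eq_or_ne n 0 with rfl | hn
  · simp [hk]
  · rw [LSeries.term_of_ne_zero hn, Complex.cpow_natCast]
    push_cast
    rfl

theorem tsum_moebius_div_pow_eq_inv {k : ℕ} (hk : 2 ≤ k) :
    ∑' d : ℕ, (μ d : ℝ) / (d : ℝ) ^ k = (∑' d : ℕ, 1 / (d : ℝ) ^ k)⁻¹ := by
  have h := LSeries_zeta_mul_Lseries_moebius (s := k) (by simp; exact_mod_cast hk)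
  have h1 := LSeries_ofReal_natCast (by omega : k ≠ 0) 1
  have hμ := LSeries_ofReal_natCast (by omega : k ≠ 0) (fun n => (μ n : ℝ))
  simp only [Pi.one_apply, Complex.ofReal_one, Complex.ofReal_intCast] at h1 hμ
  rw [LSeries_zeta_eq, Pi.one_def, h1, hμ, ← Complex.ofReal_mul, ← Complex.ofReal_one,
    Complex.ofReal_inj] at h
  exact eq_inv_of_mul_eq_one_right h

theorem hasSum_zeta_six : HasSum (fun n : ℕ => (1 : ℝ) / (n : ℝ) ^ 6) (π ^ 6 / 945) := by
  convert hasSum_zeta_nat three_ne_zero using 1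
  rw [show bernoulli 6 = 1 / 42 by decide +kernel]
  simp [Nat.factorial]
  ring

theorem sixthPowerFree_iff {n : ℤ} : SixthPowerFree n ↔ IsPowerFree 6 n.natAbs := by
  have hdvd : ∀ p : ℕ, (p : ℤ) ^ 6 ∣ n ↔ p ^ 6 ∣ n.natAbs := fun p => by
    rw [← Int.natCast_dvd]; push_cast; rfl
  simp only [SixthPowerFree, hdvd]
  refine and_iff_right_of_imp ?_
  rintro h rfl
  exact not_isPowerFree_zero 6 h

theorem ncard_setOf_natAbs_mem {S : Finset ℕ} (h0 : 0 ∉ S) :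
    {n : ℤ | n.natAbs ∈ S}.ncard = 2 * #S := by
  have hset : {n : ℤ | n.natAbs ∈ S} =
      ↑(S.image ((↑) : ℕ → ℤ) ∪ S.image (fun m : ℕ => -(m : ℤ))) := by
    ext n
    simp only [Set.mem_ofPred_eq, coe_union, coe_image, Set.mem_union, Set.mem_image, mem_coe]
    constructor
    · intro hn
      rcases Int.natAbs_eq n with h | h
      exacts [Or.inl ⟨_, hn, h.symm⟩, Or.inr ⟨_, hn, h.symm⟩]
    · rintro (⟨m, hm, rfl⟩ | ⟨m, hm, rfl⟩) <;> simpa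
  have hdisj : Disjoint (S.image ((↑) : ℕ → ℤ)) (S.image (fun m : ℕ => -(m : ℤ))) := by
    simp only [disjoint_left, mem_image, not_exists, not_and]
    rintro _ ⟨a, ha, rfl⟩ b hb hba
    have ha0 : a = 0 := by omega
    exact h0 (ha0 ▸ ha)
  rw [hset, Set.ncard_coe_finset, card_union_of_disjoint hdisj,
    card_image_of_injective _ Nat.cast_injective,
    card_image_of_injective (f := fun m : ℕ => -(m : ℤ)) _ (neg_injective.comp Nat.cast_injective),
    two_mul]

open scoped Classical in
theorem ncard_setOf_natAbs_abs_le {P : ℕ → Prop} (hP : ¬ P 0) (x : ℝ) :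
    {n : ℤ | P n.natAbs ∧ |(n : ℝ)| ≤ x}.ncard = 2 * #{m ∈ Ioc 0 ⌊x⌋₊ | P m} := by
  rw [← ncard_setOf_natAbs_mem (by simp [hP])]
  congr 1
  ext n
  simp only [Set.mem_ofPred_eq, mem_filter, mem_Ioc]
  have habs : |(n : ℝ)| = (n.natAbs : ℝ) := by rw [Nat.cast_natAbs, Int.cast_abs]
  rw [habs]
  refine ⟨fun ⟨hn, hx⟩ => ?_, fun ⟨⟨hn0, hx⟩, hn⟩ => ⟨hn, (Nat.le_floor_iff' hn0.ne').mp hx⟩⟩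
  have hn0 : n.natAbs ≠ 0 := fun h => hP (h ▸ hn)
  exact ⟨⟨Nat.pos_of_ne_zero hn0, (Nat.le_floor_iff' hn0).mpr hx⟩, hn⟩

theorem tendsto_natFloor_div_atTop_of_tendsto {u : ℕ → ℝ} {l : ℝ}
    (h : Tendsto (fun N : ℕ => u N / N) atTop (𝓝 l)) :
    Tendsto (fun x : ℝ => u ⌊x⌋₊ / x) atTop (𝓝 l) := by
  have := (h.comp tendsto_nat_floor_atTop).mul (tendsto_nat_floor_div_atTop (R := ℝ))
  rw [mul_one] at this
  refine this.congr' ?_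
  filter_upwards [eventually_ge_atTop 1] with x hx
  have hx0 : (⌊x⌋₊ : ℝ) ≠ 0 := by exact_mod_cast (Nat.floor_pos.mpr hx).ne'
  simp [div_mul_div_cancel₀ hx0]

/-- The number of sixth-power free integers `n` with `|n| ≤ x` is asymptotic to
`(2/ζ(6))·x = (1890/π⁶)·x` as `x → ∞`. -/
theorem sixthPowerFree_count_asymptotic :
    Tendsto
      (fun x : ℝ => (({n : ℤ | SixthPowerFree n ∧ |(n : ℝ)| ≤ x}.ncard : ℝ)) / x)
      atTop (nhds (1890 / Real.pi ^ 6)) := by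
  classical
  have hcount : ∀ x : ℝ, ({n : ℤ | SixthPowerFree n ∧ |(n : ℝ)| ≤ x}.ncard : ℝ) =
      2 * #{m ∈ Ioc 0 ⌊x⌋₊ | IsPowerFree 6 m} := fun x => by
    simp_rw [sixthPowerFree_iff]
    rw [ncard_setOf_natAbs_abs_le (not_isPowerFree_zero 6)]
    push_cast
    rfl
  have hlim := tendsto_card_isPowerFree_Ioc_div (k := 6) (by norm_num)
  rw [tsum_moebius_div_pow_eq_inv (by norm_num), hasSum_zeta_six.tsum_eq] at hlim
  convert (tendsto_natFloor_div_atTop_of_tendsto hlim).const_mul 2 using 2 with x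
  · rw [hcount, mul_div_assoc]
  · field_simp
    norm_num
end

section
/- Let z₀ ∈ ℂ, let F₁ and F₂ be functions meromorphic at z₀, let M ≥ 1, and let a₁,…,a_M be pairwise distinct complex numbers. Set f_j = F₁ + a_j·F₂ for 1 ≤ j ≤ M. Then for all indices j with at most one exception, the order of f_j at z₀ equals min{ord_{z₀}(F₁), ord_{z₀}(F₂)}; that is, the set of indices j with ord_{z₀}(f_j) ≠ min{ord_{z₀}(F₁), ord_{z₀}(F₂)} has at most one element. -/
/-!
Since `F₁` and `F₂` are themselves linear combinations of any two distinct `f_j, f_k`,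
the smaller of `ord f_j` and `ord f_k` is at most `μ := min (ord F₁) (ord F₂)`, while every
`ord f_j` is at least `μ`. Hence two indices cannot both have `ord f_j > μ`.
-/

section LinearCombination

variable {𝕜 E : Type*} [NontriviallyNormedField 𝕜] [NormedAddCommGroup E] [NormedSpace 𝕜 E]
  {f g : 𝕜 → E} {x : 𝕜}

theorem meromorphicOrderAt_le_const_smul (hf : MeromorphicAt f x) (c : 𝕜) :
    meromorphicOrderAt f x ≤ meromorphicOrderAt (c • f) x := by
  change _ ≤ meromorphicOrderAt ((fun _ : 𝕜 ↦ c) • f) x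
  rw [meromorphicOrderAt_smul (MeromorphicAt.const c x) hf]
  exact le_add_of_nonneg_left analyticAt_const.meromorphicOrderAt_nonneg

theorem min_meromorphicOrderAt_le_smul_add_smul (hf : MeromorphicAt f x)
    (hg : MeromorphicAt g x) (c d : 𝕜) :
    min (meromorphicOrderAt f x) (meromorphicOrderAt g x) ≤
      meromorphicOrderAt (c • f + d • g) x :=
  (min_le_min (meromorphicOrderAt_le_const_smul hf c) (meromorphicOrderAt_le_const_smul hg d)).trans
    (meromorphicOrderAt_add (hf.const_smul c) (hg.const_smul d))

theorem min_meromorphicOrderAt_le_add_smul (hf : MeromorphicAt f x) (hg : MeromorphicAt g x)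
    (a : 𝕜) :
    min (meromorphicOrderAt f x) (meromorphicOrderAt g x) ≤ meromorphicOrderAt (f + a • g) x := by
  simpa only [one_smul] using min_meromorphicOrderAt_le_smul_add_smul hf hg 1 a

theorem min_meromorphicOrderAt_add_smul_eq (hf : MeromorphicAt f x) (hg : MeromorphicAt g x)
    {a b : 𝕜} (hab : a ≠ b) :
    min (meromorphicOrderAt (f + a • g) x) (meromorphicOrderAt (f + b • g) x) =
      min (meromorphicOrderAt f x) (meromorphicOrderAt g x) := by
  have hsub : a - b ≠ 0 := sub_ne_zero.mpr hab
  have hu := hf.add (hg.const_smul a)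
  have hv := hf.add (hg.const_smul b)
  have hf_eq : f = (-b / (a - b)) • (f + a • g) + (a / (a - b)) • (f + b • g) := by
    ext z
    simp only [Pi.add_apply, Pi.smul_apply]
    match_scalars <;> field_simp <;> ring
  have hg_eq : g = (a - b)⁻¹ • (f + a • g) + (-(a - b)⁻¹) • (f + b • g) := by
    ext z
    simp only [Pi.add_apply, Pi.smul_apply]
    match_scalars <;> field_simp <;> ring
  refine le_antisymm (le_min ?_ ?_)
    (le_min (min_meromorphicOrderAt_le_add_smul hf hg a)
      (min_meromorphicOrderAt_le_add_smul hf hg b))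
  · exact (min_meromorphicOrderAt_le_smul_add_smul hu hv _ _).trans_eq (by rw [← hf_eq])
  · exact (min_meromorphicOrderAt_le_smul_add_smul hu hv _ _).trans_eq (by rw [← hg_eq])

end LinearCombination

theorem order_eq_min_with_one_exception_general (z₀ : ℂ) (F₁ F₂ : ℂ → ℂ)
    (hF₁ : MeromorphicAt F₁ z₀) (hF₂ : MeromorphicAt F₂ z₀)
    (M : ℕ) (a : Fin M → ℂ) (ha : Function.Injective a) :
    {j : Fin M | meromorphicOrderAt (fun z => F₁ z + a j * F₂ z) z₀ ≠
      min (meromorphicOrderAt F₁ z₀) (meromorphicOrderAt F₂ z₀)}.Subsingleton := by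
  intro j hj k hk
  by_contra hjk
  set μ := min (meromorphicOrderAt F₁ z₀) (meromorphicOrderAt F₂ z₀)
  have hgt : ∀ i, meromorphicOrderAt (F₁ + a i • F₂) z₀ ≠ μ →
      μ < meromorphicOrderAt (F₁ + a i • F₂) z₀ :=
    fun i hi ↦ (min_meromorphicOrderAt_le_add_smul hF₁ hF₂ (a i)).lt_of_ne' hi
  have hlt := lt_min (hgt j hj) (hgt k hk)
  rw [min_meromorphicOrderAt_add_smul_eq hF₁ hF₂ (ha.ne hjk)] at hlt
  exact lt_irrefl μ hlt

/-- If `F₁, F₂` are meromorphic at `z₀`, `a₁, …, a_M` are pairwise distinct complex numbers,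
and `f_j = F₁ + a_j·F₂`, then for all indices `j` with at most one exception the order of
`f_j` at `z₀` equals `min {ord_{z₀}(F₁), ord_{z₀}(F₂)}` (the minimum taken in `ℤ ∪ {+∞}`). -/
theorem order_eq_min_with_one_exception (z₀ : ℂ) (F₁ F₂ : ℂ → ℂ)
    (hF₁ : MeromorphicAt F₁ z₀) (hF₂ : MeromorphicAt F₂ z₀)
    (M : ℕ) (hM : 1 ≤ M) (a : Fin M → ℂ) (ha : Function.Injective a)
    (hf : ∀ j : Fin M, MeromorphicAt (fun z => F₁ z + a j * F₂ z) z₀) :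
    {j : Fin M | meromorphicOrderAt (fun z => F₁ z + a j * F₂ z) z₀ ≠
      min (meromorphicOrderAt F₁ z₀) (meromorphicOrderAt F₂ z₀)}.Subsingleton :=
  order_eq_min_with_one_exception_general z₀ F₁ F₂ hF₁ hF₂ M a ha
end
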